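/- arXiv:1912.03896 — 5 statements merged into one kernel-verified Lean document; each statement's English description precedes it below -/
import Mathlib

section
/- Soft thresholding never decreases the ℓ₁/ℓ₂ sparsity ratio: for every integer n ≥ 2, every nonzero x ∈ ℝⁿ, and all 0 ≤ λ₁ < λ₂ < maxⱼ |x(j)|, one has ‖st(x, λ₂)‖₁/‖st(x, λ₂)‖₂ ≤ ‖st(x, λ₁)‖₁/‖st(x, λ₁)‖₂; equivalently, spar(st(x, λ₂)) ≥ spar(st(x, λ₁)). -/
lemma key_ineq {n : ℕ} (a : Fin n → ℝ) (δ : ℝ) (ha : ∀ j, 0 ≤ a j) (hδ : 0 < δ) :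
    (∑ j, max 0 (a j - δ)) ^ 2 * (∑ j, (a j) ^ 2) ≤
      (∑ j, a j) ^ 2 * (∑ j, (max 0 (a j - δ)) ^ 2) := by
  set b : Fin n → ℝ := fun j => max 0 (a j - δ) with hb
  set c : Fin n → ℝ := fun j => min (a j) δ with hc
  have hb0 : ∀ j, 0 ≤ b j := fun j => le_max_left _ _
  have hc0 : ∀ j, 0 ≤ c j := fun j => le_min (ha j) hδ.le
  have hcδ : ∀ j, c j ≤ δ := fun j => min_le_right _ _
  have hbc : ∀ j, a j = b j + c j := by
    intro j
    rcases le_total (a j) δ with h | h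
    · simp [hb, hc, max_eq_left (by linarith : a j - δ ≤ 0), min_eq_left h]
    · simp [hb, hc, max_eq_right (by linarith : (0:ℝ) ≤ a j - δ), min_eq_right h]
  have hbcδ : ∀ j, b j * c j = δ * b j := by
    intro j
    rcases le_or_gt (a j) δ with h | h
    · have : b j = 0 := max_eq_left (by linarith)
      simp [this]
    · have : c j = δ := min_eq_right h.le
      rw [this]; ring
  set s : Finset (Fin n) := Finset.univ.filter (fun j => δ < a j) with hs
  have hbs : ∀ j ∉ s, b j = 0 := by
    intro j hj
    simp [hs] at hj
    exact max_eq_left (by linarith)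
  have hcs : ∀ j ∈ s, c j = δ := by
    intro j hj
    simp [hs] at hj
    exact min_eq_right hj.le
  set B1 := ∑ j, b j with hB1
  set B2 := ∑ j, b j ^ 2 with hB2
  set C1 := ∑ j, c j with hC1
  set C2 := ∑ j, c j ^ 2 with hC2
  set K := (s.card : ℝ) with hK
  have hB1s : B1 = ∑ j ∈ s, b j :=
    (Finset.sum_subset s.subset_univ (fun j _ hj => hbs j hj)).symm
  have hB2s : B2 = ∑ j ∈ s, b j ^ 2 :=
    (Finset.sum_subset s.subset_univ (fun j _ hj => by rw [hbs j hj]; ring)).symm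
  have hCS : B1 ^ 2 ≤ K * B2 := by
    rw [hB1s, hB2s, hK]
    have := Finset.sum_mul_sq_le_sq_mul_sq s (fun _ => (1:ℝ)) b
    simpa using this
  have hKC : K * δ ≤ C1 := by
    have h1 : ∑ j ∈ s, c j = K * δ := by
      rw [Finset.sum_congr rfl hcs]
      simp [hK, mul_comm]
    rw [hC1, ← h1]
    exact Finset.sum_le_sum_of_subset_of_nonneg s.subset_univ (fun j _ _ => hc0 j)
  have hC2le : C2 ≤ δ * C1 := by
    rw [hC2, hC1, Finset.mul_sum]
    apply Finset.sum_le_sum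
    intro j _
    have := hc0 j
    have := hcδ j
    nlinarith
  have hA1 : ∑ j, a j = B1 + C1 := by
    rw [hB1, hC1, ← Finset.sum_add_distrib]
    exact Finset.sum_congr rfl (fun j _ => hbc j)
  have hA2 : ∑ j, (a j) ^ 2 = B2 + 2 * δ * B1 + C2 := by
    have h1 : ∀ j, (a j) ^ 2 = b j ^ 2 + 2 * (δ * b j) + c j ^ 2 := by
      intro j
      rw [← hbcδ j, hbc j]; ring
    rw [Finset.sum_congr rfl (fun j _ => h1 j)]
    simp [Finset.sum_add_distrib, ← Finset.mul_sum, hB2, hB1, hC2]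
    ring
  have hB1n : 0 ≤ B1 := Finset.sum_nonneg (fun j _ => hb0 j)
  have hB2n : 0 ≤ B2 := Finset.sum_nonneg (fun j _ => sq_nonneg _)
  have hC1n : 0 ≤ C1 := Finset.sum_nonneg (fun j _ => hc0 j)
  have hC2n : 0 ≤ C2 := Finset.sum_nonneg (fun j _ => sq_nonneg _)
  have hKn : 0 ≤ K := Nat.cast_nonneg _
  rw [hA1, hA2]
  nlinarith [mul_le_mul_of_nonneg_left hCS (mul_nonneg hδ.le hB1n),
    mul_le_mul_of_nonneg_left hKC (mul_nonneg hB1n hB2n),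
    mul_le_mul_of_nonneg_left hCS (mul_nonneg hδ.le hC1n),
    mul_le_mul_of_nonneg_left hKC (mul_nonneg hC1n hB2n),
    mul_le_mul_of_nonneg_left hC2le (sq_nonneg B1),
    mul_nonneg hB1n hC1n, mul_nonneg hB2n hC1n]

/-- The ℓ₁ norm of a vector in ℝⁿ. -/
noncomputable def l1norm {n : ℕ} (x : Fin n → ℝ) : ℝ := ∑ j, |x j|

/-- The ℓ₂ norm of a vector in ℝⁿ. -/
noncomputable def l2norm {n : ℕ} (x : Fin n → ℝ) : ℝ := Real.sqrt (∑ j, (x j) ^ 2)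

/-- The sparsity measure spar(x) = (√n − ‖x‖₁/‖x‖₂)/(√n − 1). -/
noncomputable def spar {n : ℕ} (x : Fin n → ℝ) : ℝ :=
  (Real.sqrt n - l1norm x / l2norm x) / (Real.sqrt n - 1)


/-- The soft-thresholding operator st(x, λ)(j) = sign(x(j)) · max(0, |x(j)| − λ). -/
noncomputable def softThresh {n : ℕ} (x : Fin n → ℝ) (lam : ℝ) : Fin n → ℝ :=
  fun j => Real.sign (x j) * max 0 (|x j| - lam)

lemma softThresh_abs {n : ℕ} (x : Fin n → ℝ) (lam : ℝ) (hlam : 0 ≤ lam) (j : Fin n) :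
    |softThresh x lam j| = max 0 (|x j| - lam) := by
  unfold softThresh
  rcases lt_trichotomy (x j) 0 with h | h | h
  · rw [Real.sign_of_neg h, abs_mul, abs_neg, abs_one, one_mul,
      abs_of_nonneg (le_max_left _ _)]
  · simp [h, max_eq_left (by linarith : -lam ≤ 0)]
  · rw [Real.sign_of_pos h, abs_mul, abs_one, one_mul, abs_of_nonneg (le_max_left _ _)]

lemma softThresh_sq {n : ℕ} (x : Fin n → ℝ) (lam : ℝ) (hlam : 0 ≤ lam) (j : Fin n) :
    (softThresh x lam j) ^ 2 = (max 0 (|x j| - lam)) ^ 2 := by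
  rw [← sq_abs, softThresh_abs x lam hlam j]

/-- Soft thresholding never decreases sparsity: for 0 ≤ λ₁ < λ₂ < maxⱼ |x(j)|,
the ℓ₁/ℓ₂ ratio of st(x, λ₂) is at most that of st(x, λ₁), equivalently
spar(st(x, λ₁)) ≤ spar(st(x, λ₂)). -/
theorem softThresh_spar_mono {n : ℕ} (hn : 2 ≤ n) (x : Fin n → ℝ) (hx : x ≠ 0)
    (lam₁ lam₂ : ℝ) (h0 : 0 ≤ lam₁) (h12 : lam₁ < lam₂)
    (hmax : ∃ j, lam₂ < |x j|) :
    l1norm (softThresh x lam₂) / l2norm (softThresh x lam₂) ≤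
      l1norm (softThresh x lam₁) / l2norm (softThresh x lam₁) ∧
    spar (softThresh x lam₁) ≤ spar (softThresh x lam₂) := by
  have h02 : (0:ℝ) ≤ lam₂ := le_of_lt (lt_of_le_of_lt h0 h12)
  set a : Fin n → ℝ := fun j => max 0 (|x j| - lam₁) with ha
  set δ := lam₂ - lam₁ with hδdef
  have hδ : 0 < δ := by simp [hδdef]; linarith
  have ha0 : ∀ j, 0 ≤ a j := fun j => le_max_left _ _
  have hab : ∀ j, max 0 (|x j| - lam₂) = max 0 (a j - δ) := by
    intro j
    rcases le_total (|x j|) lam₁ with h | h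
    · rw [max_eq_left (by linarith : |x j| - lam₂ ≤ 0)]
      rw [show a j = 0 from max_eq_left (by linarith), max_eq_left (by linarith)]
    · rw [show a j = |x j| - lam₁ from max_eq_right (by linarith)]
      congr 1
      rw [hδdef]; ring
  -- l1 and l2 of the two thresholded vectors
  have hl1₁ : l1norm (softThresh x lam₁) = ∑ j, a j := by
    unfold l1norm
    exact Finset.sum_congr rfl (fun j _ => softThresh_abs x lam₁ h0 j)
  have hl1₂ : l1norm (softThresh x lam₂) = ∑ j, max 0 (a j - δ) := by
    unfold l1norm
    exact Finset.sum_congr rfl (fun j _ => by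
      rw [softThresh_abs x lam₂ h02 j, hab j])
  have hl2₁ : l2norm (softThresh x lam₁) = Real.sqrt (∑ j, (a j) ^ 2) := by
    unfold l2norm
    congr 1
    exact Finset.sum_congr rfl (fun j _ => softThresh_sq x lam₁ h0 j)
  have hl2₂ : l2norm (softThresh x lam₂) = Real.sqrt (∑ j, (max 0 (a j - δ)) ^ 2) := by
    unfold l2norm
    congr 1
    exact Finset.sum_congr rfl (fun j _ => by
      rw [softThresh_sq x lam₂ h02 j, hab j])
  -- positivity
  obtain ⟨j₀, hj₀⟩ := hmax
  have hbpos : 0 < max 0 (a j₀ - δ) := by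
    rw [← hab j₀]
    exact lt_max_of_lt_right (by linarith)
  have hB2pos : 0 < ∑ j, (max 0 (a j - δ)) ^ 2 :=
    Finset.sum_pos' (fun j _ => sq_nonneg _) ⟨j₀, Finset.mem_univ j₀, pow_pos hbpos 2⟩
  have hA2pos : 0 < ∑ j, (a j) ^ 2 := by
    apply Finset.sum_pos' (fun j _ => sq_nonneg _)
    refine ⟨j₀, Finset.mem_univ j₀, pow_pos ?_ 2⟩
    exact lt_max_of_lt_right (by linarith)
  have hB1n : 0 ≤ ∑ j, max 0 (a j - δ) :=
    Finset.sum_nonneg (fun j _ => le_max_left _ _)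
  have hA1n : 0 ≤ ∑ j, a j := Finset.sum_nonneg (fun j _ => ha0 j)
  have key := key_ineq a δ ha0 hδ
  -- the ratio inequality
  have hratio : (∑ j, max 0 (a j - δ)) / Real.sqrt (∑ j, (max 0 (a j - δ)) ^ 2) ≤
      (∑ j, a j) / Real.sqrt (∑ j, (a j) ^ 2) := by
    rw [div_le_div_iff₀ (Real.sqrt_pos.mpr hB2pos) (Real.sqrt_pos.mpr hA2pos)]
    have e1 : (∑ j, max 0 (a j - δ)) * Real.sqrt (∑ j, (a j) ^ 2) =
        Real.sqrt ((∑ j, max 0 (a j - δ)) ^ 2 * (∑ j, (a j) ^ 2)) := by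
      rw [Real.sqrt_mul (sq_nonneg _), Real.sqrt_sq hB1n]
    have e2 : (∑ j, a j) * Real.sqrt (∑ j, (max 0 (a j - δ)) ^ 2) =
        Real.sqrt ((∑ j, a j) ^ 2 * (∑ j, (max 0 (a j - δ)) ^ 2)) := by
      rw [Real.sqrt_mul (sq_nonneg _), Real.sqrt_sq hA1n]
    rw [e1, e2]
    exact Real.sqrt_le_sqrt key
  have hmain : l1norm (softThresh x lam₂) / l2norm (softThresh x lam₂) ≤
      l1norm (softThresh x lam₁) / l2norm (softThresh x lam₁) := by
    rw [hl1₁, hl1₂, hl2₁, hl2₂]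
    exact hratio
  refine ⟨hmain, ?_⟩
  unfold spar
  have hsqrtn : 1 < Real.sqrt n := by
    rw [show (1:ℝ) = Real.sqrt 1 from (Real.sqrt_one).symm]
    apply Real.sqrt_lt_sqrt (by norm_num)
    exact_mod_cast lt_of_lt_of_le one_lt_two (by exact_mod_cast hn)
  have hd : (0:ℝ) < Real.sqrt n - 1 := by linarith
  apply div_le_div_of_nonneg_right ?_ hd.le
  linarith [hmain]
end

section
/- Soft thresholding strictly increases sparsity on the full-support regime for non-constant vectors: let n ≥ 2 and let x ∈ ℝⁿ have all entries positive and not all equal. Then for all 0 ≤ λ₁ < λ₂ < minⱼ x(j), one has ‖st(x, λ₂)‖₁/‖st(x, λ₂)‖₂ < ‖st(x, λ₁)‖₁/‖st(x, λ₁)‖₂; equivalently, spar(st(x, λ₂)) > spar(st(x, λ₁)). -/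
/-- Soft thresholding strictly increases sparsity on the full-support regime for
positive, non-constant vectors: for 0 ≤ λ₁ < λ₂ < minⱼ x(j), the ℓ₁/ℓ₂ ratio of
st(x, λ₂) is strictly smaller than that of st(x, λ₁), equivalently
spar(st(x, λ₁)) < spar(st(x, λ₂)). -/
theorem softThresh_spar_strict_mono {n : ℕ} (hn : 2 ≤ n) (x : Fin n → ℝ)
    (hpos : ∀ j, 0 < x j) (hnc : ∃ i j, x i ≠ x j)
    (lam₁ lam₂ : ℝ) (h0 : 0 ≤ lam₁) (h12 : lam₁ < lam₂)
    (hmin : ∀ j, lam₂ < x j) :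
    l1norm (softThresh x lam₂) / l2norm (softThresh x lam₂) <
      l1norm (softThresh x lam₁) / l2norm (softThresh x lam₁) ∧
    spar (softThresh x lam₁) < spar (softThresh x lam₂) := by
  have hn0 : 0 < n := by omega
  have hne : (Finset.univ : Finset (Fin n)).Nonempty := ⟨⟨0, hn0⟩, Finset.mem_univ _⟩
  have hmin₁ : ∀ j, lam₁ < x j := fun j => h12.trans (hmin j)
  -- soft thresholding is just subtraction here
  have hst : ∀ lam, (∀ j, lam < x j) → softThresh x lam = fun j => x j - lam := by
    intro lam hlt
    funext j
    have hx := hpos j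
    rw [softThresh, Real.sign_of_pos hx, abs_of_pos hx,
      max_eq_right (by linarith [hlt j]), one_mul]
  have h1 : softThresh x lam₁ = fun j => x j - lam₁ := hst _ hmin₁
  have h2 : softThresh x lam₂ = fun j => x j - lam₂ := hst _ hmin
  set S : ℝ := ∑ j, x j with hS
  set Q : ℝ := ∑ j, (x j) ^ 2 with hQ
  -- l1 norms
  have hl1 : ∀ lam, (∀ j, lam < x j) →
      l1norm (fun j => x j - lam) = S - n * lam := by
    intro lam hlt
    rw [l1norm]
    have : ∀ j : Fin n, |x j - lam| = x j - lam := fun j =>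
      abs_of_pos (by linarith [hlt j])
    simp only [this, Finset.sum_sub_distrib, Finset.sum_const, Finset.card_univ,
      Fintype.card_fin, nsmul_eq_mul, hS]
  -- l2 norms squared
  have hq : ∀ lam : ℝ, (∑ j, (x j - lam) ^ 2) = Q - 2 * lam * S + n * lam ^ 2 := by
    intro lam
    have : ∀ j : Fin n, (x j - lam) ^ 2 = x j ^ 2 - 2 * lam * x j + lam ^ 2 :=
      fun j => by ring
    simp only [this, Finset.sum_add_distrib, Finset.sum_sub_distrib,
      Finset.sum_const, Finset.card_univ, Fintype.card_fin, nsmul_eq_mul,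
      ← Finset.mul_sum, hS, hQ]
  -- strict Cauchy-Schwarz: S^2 < n * Q
  have hCS : S ^ 2 < n * Q := by
    have inner : ∀ i, ∑ j, (x i - x j) ^ 2 = n * x i ^ 2 + Q - 2 * x i * S := by
      intro i
      have : ∀ j : Fin n, (x i - x j) ^ 2 = x i ^ 2 + x j ^ 2 - 2 * x i * x j :=
        fun j => by ring
      simp only [this, Finset.sum_sub_distrib, Finset.sum_add_distrib,
        Finset.sum_const, Finset.card_univ, Fintype.card_fin, nsmul_eq_mul,
        ← Finset.mul_sum, hS, hQ]
    have hdouble : ∑ i, ∑ j, (x i - x j) ^ 2 = 2 * ((n : ℝ) * Q - S ^ 2) := by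
      simp only [inner, Finset.sum_add_distrib, Finset.sum_sub_distrib,
        Finset.sum_const, Finset.card_univ, Fintype.card_fin, nsmul_eq_mul,
        ← Finset.mul_sum, ← Finset.sum_mul, hS, hQ]
      ring
    obtain ⟨i0, j0, hij⟩ := hnc
    have hinner : 0 < ∑ j, (x i0 - x j) ^ 2 :=
      Finset.sum_pos' (fun j _ => sq_nonneg _)
        ⟨j0, Finset.mem_univ _, by have h : x i0 - x j0 ≠ 0 := sub_ne_zero.2 hij; positivity⟩
    have hdpos : 0 < ∑ i, ∑ j, (x i - x j) ^ 2 :=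
      Finset.sum_pos' (fun i _ => Finset.sum_nonneg fun j _ => sq_nonneg _)
        ⟨i0, Finset.mem_univ _, hinner⟩
    nlinarith [hdouble]
  -- abbreviations
  set s₁ : ℝ := S - n * lam₁ with hs₁
  set s₂ : ℝ := S - n * lam₂ with hs₂
  set q₁ : ℝ := Q - 2 * lam₁ * S + n * lam₁ ^ 2 with hq₁
  set q₂ : ℝ := Q - 2 * lam₂ * S + n * lam₂ ^ 2 with hq₂
  have hs₁pos : 0 < s₁ := by
    have : (0:ℝ) < ∑ j, (x j - lam₁) :=
      Finset.sum_pos (fun j _ => by linarith [hmin₁ j]) hne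
    have hsum : ∑ j, (x j - lam₁) = s₁ := by
      simp [Finset.sum_sub_distrib, Finset.sum_const, Finset.card_univ,
        Fintype.card_fin, nsmul_eq_mul, hS, hs₁]
    linarith [hsum ▸ this]
  have hs₂pos : 0 < s₂ := by
    have : (0:ℝ) < ∑ j, (x j - lam₂) :=
      Finset.sum_pos (fun j _ => by linarith [hmin j]) hne
    have hsum : ∑ j, (x j - lam₂) = s₂ := by
      simp [Finset.sum_sub_distrib, Finset.sum_const, Finset.card_univ,
        Fintype.card_fin, nsmul_eq_mul, hS, hs₂]
    linarith [hsum ▸ this]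
  have hq₁pos : 0 < q₁ := by
    rw [hq₁, ← hq]
    exact Finset.sum_pos (fun j _ => pow_pos (by linarith [hmin₁ j]) 2) hne
  have hq₂pos : 0 < q₂ := by
    rw [hq₂, ← hq]
    exact Finset.sum_pos (fun j _ => pow_pos (by linarith [hmin j]) 2) hne
  have hq21 : q₂ < q₁ := by
    rw [hq₁, hq₂, ← hq, ← hq]
    refine Finset.sum_lt_sum_of_nonempty hne fun j _ => ?_
    have h1' : 0 < x j - lam₂ := by linarith [hmin j]
    have h2' : x j - lam₂ < x j - lam₁ := by linarith
    exact pow_lt_pow_left₀ h2' h1'.le (by norm_num)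
  -- key algebraic inequality
  have hkey : s₂ ^ 2 * q₁ < s₁ ^ 2 * q₂ := by
    have id₁ : s₁ ^ 2 = n * q₁ + (S ^ 2 - n * Q) := by rw [hs₁, hq₁]; ring
    have id₂ : s₂ ^ 2 = n * q₂ + (S ^ 2 - n * Q) := by rw [hs₂, hq₂]; ring
    nlinarith [hCS, hq21]
  -- norms
  have hl2₁ : l2norm (softThresh x lam₁) = Real.sqrt q₁ := by
    rw [h1, l2norm, hq, hq₁]
  have hl2₂ : l2norm (softThresh x lam₂) = Real.sqrt q₂ := by
    rw [h2, l2norm, hq, hq₂]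
  have hl1₁ : l1norm (softThresh x lam₁) = s₁ := by rw [h1, hl1 _ hmin₁, hs₁]
  have hl1₂ : l1norm (softThresh x lam₂) = s₂ := by rw [h2, hl1 _ hmin, hs₂]
  have hsq₁ : 0 < Real.sqrt q₁ := Real.sqrt_pos.2 hq₁pos
  have hsq₂ : 0 < Real.sqrt q₂ := Real.sqrt_pos.2 hq₂pos
  have hratio : s₂ / Real.sqrt q₂ < s₁ / Real.sqrt q₁ := by
    rw [div_lt_div_iff₀ hsq₂ hsq₁]
    refine lt_of_pow_lt_pow_left₀ 2 (by positivity) ?_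
    rw [mul_pow, mul_pow, Real.sq_sqrt hq₁pos.le, Real.sq_sqrt hq₂pos.le]
    exact hkey
  have hmain : l1norm (softThresh x lam₂) / l2norm (softThresh x lam₂) <
      l1norm (softThresh x lam₁) / l2norm (softThresh x lam₁) := by
    rw [hl1₁, hl1₂, hl2₁, hl2₂]; exact hratio
  refine ⟨hmain, ?_⟩
  have hsqrtn : (1 : ℝ) < Real.sqrt n := by
    rw [show (1:ℝ) = Real.sqrt 1 by simp]
    exact Real.sqrt_lt_sqrt (by norm_num) (by exact_mod_cast by omega)
  rw [spar, spar]
  have hd : 0 < Real.sqrt n - 1 := by linarith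
  rw [div_lt_div_iff₀ hd hd]
  nlinarith [hmain]
end

section
/- Strict monotonicity of the weighted correlation under shrinkage (core of Lemma 2): let w ∈ ℝⁿ be nonnegative and nonzero, and let x ∈ ℝⁿ be nonnegative and not a scalar multiple of w. For γ ≥ 0 with x(j) > γ·w(j) for all j, define f(γ) = wᵀ(x − γw)/‖x − γw‖₂. Then for all 0 ≤ γ₁ < γ₂ such that x(j) > γ₂·w(j) for all j, one has f(γ₂) < f(γ₁). -/
open scoped RealInnerProductSpace

section InnerProductSpace

variable {E : Type*} [NormedAddCommGroup E] [InnerProductSpace ℝ E]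

theorem real_inner_lt_norm_mul_of_forall_ne_smul {w a : E} (hw : w ≠ 0)
    (ha : ∀ c : ℝ, a ≠ c • w) : ⟪w, a⟫ < ‖w‖ * ‖a‖ := by
  refine inner_lt_norm_mul_iff_real.mpr fun h => ha (‖a‖ / ‖w‖) ?_
  rw [div_eq_inv_mul, mul_smul, h, smul_smul, inv_mul_cancel₀ (norm_ne_zero_iff.mpr hw),
    one_smul]

/-- With `S = ⟪w, a⟫` and `B = ‖w‖²`, moving along `-w` gives `⟪w, a - t • w⟫ = S - t B` and
`‖a - t • w‖² = ‖a‖² - 2 t S + t² B`, whence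
`(S ‖a - t • w‖)² - (⟪w, a - t • w⟫ ‖a‖)² = t (S + ⟪w, a - t • w⟫) (B ‖a‖² - S²)`,
which is positive by the strict Cauchy–Schwarz inequality. -/
theorem real_inner_sub_smul_div_norm_lt {w a : E} (hw : w ≠ 0) (ha : ∀ c : ℝ, a ≠ c • w)
    {t : ℝ} (ht : 0 < t) (hpos : 0 < ⟪w, a - t • w⟫) :
    ⟪w, a - t • w⟫ / ‖a - t • w‖ < ⟪w, a⟫ / ‖a‖ := by
  have hinner : ⟪w, a - t • w⟫ = ⟪w, a⟫ - t * ‖w‖ ^ 2 := by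
    rw [inner_sub_right, real_inner_smul_right, real_inner_self_eq_norm_sq]
  have hnorm : ‖a - t • w‖ ^ 2 = ‖a‖ ^ 2 - 2 * t * ⟪w, a⟫ + t ^ 2 * ‖w‖ ^ 2 := by
    rw [norm_sub_sq_real, real_inner_smul_right, norm_smul, mul_pow, Real.norm_eq_abs, sq_abs,
      real_inner_comm]
    ring
  have hcs := real_inner_lt_norm_mul_of_forall_ne_smul hw ha
  have ha0 : 0 < ‖a‖ := norm_pos_iff.mpr fun h => ha 0 (by rw [h, zero_smul])
  have hb0 : 0 < ‖a - t • w‖ := norm_pos_iff.mpr fun h => by simp [h] at hpos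
  have hS : 0 < ⟪w, a⟫ := by nlinarith [norm_nonneg w]
  have hcs_sq : ⟪w, a⟫ ^ 2 < ‖w‖ ^ 2 * ‖a‖ ^ 2 := by
    rw [← mul_pow]
    exact pow_lt_pow_left₀ hcs hS.le two_ne_zero
  have hsq : (⟪w, a - t • w⟫ * ‖a‖) ^ 2 < (⟪w, a⟫ * ‖a - t • w‖) ^ 2 := by
    have key : (⟪w, a⟫ * ‖a - t • w‖) ^ 2 - (⟪w, a - t • w⟫ * ‖a‖) ^ 2
        = t * (⟪w, a⟫ + ⟪w, a - t • w⟫) * (‖w‖ ^ 2 * ‖a‖ ^ 2 - ⟪w, a⟫ ^ 2) := by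
      rw [mul_pow, hnorm, hinner]
      ring
    have : 0 < t * (⟪w, a⟫ + ⟪w, a - t • w⟫) * (‖w‖ ^ 2 * ‖a‖ ^ 2 - ⟪w, a⟫ ^ 2) := by
      have := sub_pos.mpr hcs_sq
      positivity
    linarith
  rw [div_lt_div_iff₀ hb0 ha0]
  exact lt_of_pow_lt_pow_left₀ 2 (by positivity) hsq

end InnerProductSpace

theorem l2norm_eq_norm_toLp {n : ℕ} (v : Fin n → ℝ) :
    l2norm v = ‖(WithLp.toLp 2 v : EuclideanSpace ℝ (Fin n))‖ := by
  simp [l2norm, EuclideanSpace.norm_eq]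

theorem sum_mul_eq_inner_toLp {n : ℕ} (u v : Fin n → ℝ) :
    ∑ j, u j * v j =
      ⟪(WithLp.toLp 2 u : EuclideanSpace ℝ (Fin n)), WithLp.toLp 2 v⟫ := by
  simp [PiLp.inner_apply, mul_comm]

theorem weighted_corr_strict_decreasing_general {n : ℕ} (w x : Fin n → ℝ)
    (hw : ∀ j, 0 ≤ w j) (hw0 : w ≠ 0)
    (hxw : ∀ c : ℝ, x ≠ c • w)
    (γ₁ γ₂ : ℝ) (h12 : γ₁ < γ₂) (hdom : ∀ j, γ₂ * w j < x j) :
    (∑ j, w j * (x j - γ₂ * w j)) / l2norm (fun j => x j - γ₂ * w j) <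
      (∑ j, w j * (x j - γ₁ * w j)) / l2norm (fun j => x j - γ₁ * w j) := by
  set W : EuclideanSpace ℝ (Fin n) := WithLp.toLp 2 w
  set A : EuclideanSpace ℝ (Fin n) := WithLp.toLp 2 fun j => x j - γ₁ * w j
  have hshift : A - (γ₂ - γ₁) • W = WithLp.toLp 2 fun j => x j - γ₂ * w j := by
    ext j
    simp only [PiLp.sub_apply, PiLp.smul_apply, smul_eq_mul, A, W]
    ring
  have hW : W ≠ 0 := by simpa [W] using hw0
  have hA : ∀ c : ℝ, A ≠ c • W := fun c h => hxw (c + γ₁) <| funext fun j => by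
    have := congrArg (·.ofLp j) h
    simp only [PiLp.smul_apply, smul_eq_mul, W, A] at this
    simp only [Pi.smul_apply, smul_eq_mul]
    linarith
  have hpos : 0 < ∑ j, w j * (x j - γ₂ * w j) := by
    obtain ⟨j, hj⟩ := Function.ne_iff.mp hw0
    exact Finset.sum_pos' (fun i _ => mul_nonneg (hw i) (sub_pos.mpr (hdom i)).le)
      ⟨j, Finset.mem_univ j, mul_pos ((hw j).lt_of_ne' hj) (sub_pos.mpr (hdom j))⟩
  rw [sum_mul_eq_inner_toLp, ← hshift] at hpos
  rw [sum_mul_eq_inner_toLp, sum_mul_eq_inner_toLp, l2norm_eq_norm_toLp, l2norm_eq_norm_toLp,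
    ← hshift]
  exact real_inner_sub_smul_div_norm_lt hW hA (sub_pos.mpr h12) hpos

/-- Strict monotonicity of the weighted correlation under shrinkage: with w ≥ 0
nonzero, x ≥ 0 not a scalar multiple of w, and f(γ) = wᵀ(x − γw)/‖x − γw‖₂, one has
f(γ₂) < f(γ₁) for all 0 ≤ γ₁ < γ₂ with x(j) > γ₂·w(j) for all j. -/
theorem weighted_corr_strict_decreasing {n : ℕ} (w x : Fin n → ℝ)
    (hw : ∀ j, 0 ≤ w j) (hw0 : w ≠ 0) (hx : ∀ j, 0 ≤ x j)
    (hxw : ∀ c : ℝ, x ≠ c • w)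
    (γ₁ γ₂ : ℝ) (h0 : 0 ≤ γ₁) (h12 : γ₁ < γ₂) (hdom : ∀ j, γ₂ * w j < x j) :
    (∑ j, w j * (x j - γ₂ * w j)) / l2norm (fun j => x j - γ₂ * w j) <
      (∑ j, w j * (x j - γ₁ * w j)) / l2norm (fun j => x j - γ₁ * w j) :=
  weighted_corr_strict_decreasing_general w x hw hw0 hxw γ₁ γ₂ h12 hdom
end

section
/- Equivalence of the sparse projection problem and its sign-free spherical reformulation: let n ≥ 2, let x ∈ ℝⁿ be nonzero, and let s ∈ [0, 1]. Suppose x̄* maximizes x̄ᵀ|x| over the set {x̄ ∈ ℝⁿ : x̄ ≥ 0, ‖x̄‖₂ = 1, spar(x̄) ≥ s}, and suppose |x|ᵀx̄* > 0. Then x̃* = (|x|ᵀx̄*) · sign(x) ∘ x̄* satisfies spar(x̃*) ≥ s, and for every nonzero x̃ ∈ ℝⁿ with spar(x̃) ≥ s one has ‖x − x̃*‖₂ ≤ ‖x − x̃‖₂. -/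
/-- A sum of a function vanishing off two indices equals the sum of the two values. -/
lemma sum_pair_support {n : ℕ} {j₀ j₁ : Fin n} (f : Fin n → ℝ) (hne : j₀ ≠ j₁)
    (h : ∀ j, j ≠ j₀ → j ≠ j₁ → f j = 0) : ∑ j, f j = f j₀ + f j₁ := by
  have hzero : ∀ x ∈ Finset.univ, x ∉ ({j₀, j₁} : Finset (Fin n)) → f x = 0 := by
    intro x _ hx
    simp only [Finset.mem_insert, Finset.mem_singleton, not_or] at hx
    exact h x hx.1 hx.2
  rw [← Finset.sum_subset (Finset.subset_univ ({j₀, j₁} : Finset (Fin n))) hzero,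
    Finset.sum_pair hne]

/-- Equivalence of the sparse projection problem and its sign-free spherical
reformulation: if x̄* maximizes x̄ᵀ|x| over {x̄ ≥ 0, ‖x̄‖₂ = 1, spar(x̄) ≥ s} and
|x|ᵀx̄* > 0, then x̃* = (|x|ᵀx̄*)·sign(x)∘x̄* satisfies spar(x̃*) ≥ s and is at least
as close to x as any nonzero x̃ with spar(x̃) ≥ s. -/
theorem sparse_projection_equivalence {n : ℕ} (hn : 2 ≤ n) (x : Fin n → ℝ) (hx : x ≠ 0)
    (s : ℝ) (hs : s ∈ Set.Icc (0 : ℝ) 1) (xbs : Fin n → ℝ)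
    (hfeas : (∀ j, 0 ≤ xbs j) ∧ l2norm xbs = 1 ∧ s ≤ spar xbs)
    (hopt : ∀ xb : Fin n → ℝ, (∀ j, 0 ≤ xb j) → l2norm xb = 1 → s ≤ spar xb →
      (∑ j, xb j * |x j|) ≤ ∑ j, xbs j * |x j|)
    (hpos : 0 < ∑ j, |x j| * xbs j) :
    let xts : Fin n → ℝ := fun j => (∑ k, |x k| * xbs k) * (Real.sign (x j) * xbs j)
    s ≤ spar xts ∧
    ∀ xt : Fin n → ℝ, xt ≠ 0 → s ≤ spar xt →
      l2norm (fun j => x j - xts j) ≤ l2norm (fun j => x j - xt j) := by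
  obtain ⟨hnn, hl2, hsp⟩ := hfeas
  intro xts
  set V : ℝ := ∑ k, |x k| * xbs k with hVdef
  have hVpos : 0 < V := hpos
  have hxts_def : ∀ j, xts j = V * (Real.sign (x j) * xbs j) := fun j => rfl
  have hn1 : (1 : ℝ) < Real.sqrt n := by
    have h2 : (1 : ℝ) < (n : ℝ) := by exact_mod_cast lt_of_lt_of_le one_lt_two hn
    rw [show (1 : ℝ) = Real.sqrt 1 from (Real.sqrt_one).symm]
    exact Real.sqrt_lt_sqrt (by norm_num) h2
  have hsum2nn : (0 : ℝ) ≤ ∑ j, xbs j ^ 2 := Finset.sum_nonneg fun j _ => sq_nonneg _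
  have hsum2 : ∑ j, xbs j ^ 2 = 1 := by
    have h1 : Real.sqrt (∑ j, xbs j ^ 2) = 1 := hl2
    have h2 := Real.sq_sqrt hsum2nn
    rw [h1] at h2
    simpa using h2.symm
  -- Part A: the optimizer is supported on the support of x
  have hsupp : ∀ j, x j = 0 → xbs j = 0 := by
    intro j₀ hx0
    by_contra hne0
    have hd : 0 < xbs j₀ := lt_of_le_of_ne (hnn j₀) (Ne.symm hne0)
    obtain ⟨j₁, hj₁⟩ : ∃ j, x j ≠ 0 := by
      by_contra h
      push_neg at h
      exact hx (funext h)
    have hj01 : j₀ ≠ j₁ := by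
      intro h
      exact hj₁ (h ▸ hx0)
    set a : ℝ := xbs j₁ with hadef
    set d : ℝ := xbs j₀ with hddef
    set b : ℝ := Real.sqrt (a ^ 2 + d ^ 2) with hbdef
    have ha : 0 ≤ a := hnn j₁
    have hb0 : 0 ≤ b := Real.sqrt_nonneg _
    have hbsq : b ^ 2 = a ^ 2 + d ^ 2 := Real.sq_sqrt (by positivity)
    have hble : b ≤ a + d := by
      have h1 : b ≤ Real.sqrt ((a + d) ^ 2) := Real.sqrt_le_sqrt (by nlinarith)
      rwa [Real.sqrt_sq (by linarith)] at h1
    have hagt : a < b := by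
      have h1 : a ^ 2 < b ^ 2 := by rw [hbsq]; nlinarith
      exact lt_of_pow_lt_pow_left₀ 2 hb0 h1
    set w : Fin n → ℝ := fun j => if j = j₀ then 0 else if j = j₁ then b else xbs j with hwdef
    have hwj₀ : w j₀ = 0 := by simp [hwdef]
    have hwj₁ : w j₁ = b := by simp [hwdef, hj01.symm]
    have hwother : ∀ j, j ≠ j₀ → j ≠ j₁ → w j = xbs j := by
      intro j h0 h1; simp [hwdef, h0, h1]
    have hwnn : ∀ j, 0 ≤ w j := by
      intro j
      by_cases h0 : j = j₀
      · simp [h0, hwj₀]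
      · by_cases h1 : j = j₁
        · rw [h1, hwj₁]; exact hb0
        · rw [hwother j h0 h1]; exact hnn j
    have hsq : ∑ j, w j ^ 2 = ∑ j, xbs j ^ 2 := by
      have h1 : ∑ j, (w j ^ 2 - xbs j ^ 2) = (w j₀ ^ 2 - xbs j₀ ^ 2) + (w j₁ ^ 2 - xbs j₁ ^ 2) :=
        sum_pair_support _ hj01 (fun j h0 h1 => by rw [hwother j h0 h1]; ring)
      rw [Finset.sum_sub_distrib, hwj₀, hwj₁] at h1
      have : (0:ℝ) ^ 2 - d ^ 2 + (b ^ 2 - a ^ 2) = 0 := by rw [hbsq]; ring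
      linarith [h1, this]
    have hwl2 : l2norm w = 1 := by
      unfold l2norm
      rw [hsq, hsum2, Real.sqrt_one]
    have hl1w : l1norm w ≤ l1norm xbs := by
      unfold l1norm
      have h1 : ∑ j, (|w j| - |xbs j|) = (|w j₀| - |xbs j₀|) + (|w j₁| - |xbs j₁|) :=
        sum_pair_support _ hj01 (fun j h0 h1 => by rw [hwother j h0 h1]; ring)
      rw [Finset.sum_sub_distrib, hwj₀, hwj₁] at h1
      rw [abs_of_nonneg hb0, abs_of_nonneg (hnn j₀), abs_of_nonneg (hnn j₁)] at h1
      simp only [abs_zero] at h1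
      have : (0:ℝ) - d + (b - a) ≤ 0 := by linarith
      linarith [h1, this]
    have hsparw : s ≤ spar w := by
      refine le_trans hsp ?_
      unfold spar
      have hratio : l1norm w / l2norm w ≤ l1norm xbs / l2norm xbs := by
        rw [hwl2, hl2, div_one, div_one]; exact hl1w
      have hden : (0 : ℝ) < Real.sqrt n - 1 := by linarith
      exact div_le_div_of_nonneg_right (by linarith) hden.le
    have hobj := hopt w hwnn hwl2 hsparw
    have h2 : ∑ j, (w j * |x j| - xbs j * |x j|)
        = (w j₀ * |x j₀| - xbs j₀ * |x j₀|) + (w j₁ * |x j₁| - xbs j₁ * |x j₁|) :=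
      sum_pair_support _ hj01 (fun j h0 h1 => by rw [hwother j h0 h1]; ring)
    rw [Finset.sum_sub_distrib, hwj₀, hwj₁, hx0] at h2
    simp only [abs_zero, mul_zero, zero_mul] at h2
    have hxj₁ : 0 < |x j₁| := abs_pos.mpr hj₁
    have hgain : 0 < (b - a) * |x j₁| := mul_pos (by linarith) hxj₁
    have : ∑ j, w j * |x j| - ∑ j, xbs j * |x j| = b * |x j₁| - a * |x j₁| := by linarith
    nlinarith [hobj, this, hgain]
  -- basic sign facts
  have hsgn : ∀ j, x j * Real.sign (x j) = |x j| := by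
    intro j
    rcases lt_trichotomy (x j) 0 with h | h | h
    · rw [Real.sign_of_neg h, abs_of_neg h]; ring
    · simp [h]
    · rw [Real.sign_of_pos h, abs_of_pos h]; ring
  have habs_xts : ∀ j, |xts j| = V * xbs j := by
    intro j
    rw [hxts_def j]
    rcases eq_or_ne (x j) 0 with h | h
    · simp [h, hsupp j h]
    · rcases lt_or_gt_of_ne h with hlt | hgt
      · rw [Real.sign_of_neg hlt]
        rw [abs_mul, abs_mul, abs_of_pos hVpos, abs_of_nonneg (hnn j)]
        simp
      · rw [Real.sign_of_pos hgt]
        rw [abs_mul, abs_mul, abs_of_pos hVpos, abs_of_nonneg (hnn j)]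
        simp
  have hxts_sq : ∀ j, xts j ^ 2 = V ^ 2 * xbs j ^ 2 := by
    intro j
    rw [← sq_abs (xts j), habs_xts j]; ring
  have hsumxts2 : ∑ j, xts j ^ 2 = V ^ 2 := by
    rw [Finset.sum_congr rfl fun j _ => hxts_sq j, ← Finset.mul_sum, hsum2, mul_one]
  have hl2xts : l2norm xts = V := by
    unfold l2norm
    rw [hsumxts2, Real.sqrt_sq hVpos.le]
  have hl1xbs : l1norm xbs = ∑ j, xbs j :=
    Finset.sum_congr rfl fun j _ => abs_of_nonneg (hnn j)
  have hl1xts : l1norm xts = V * ∑ j, xbs j := by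
    unfold l1norm
    rw [Finset.sum_congr rfl fun j _ => habs_xts j, ← Finset.mul_sum]
  have hspar_xts : spar xts = spar xbs := by
    unfold spar
    congr 1
    congr 1
    rw [hl1xts, hl2xts, hl2, hl1xbs, div_one]
    exact mul_div_cancel_left₀ _ (ne_of_gt hVpos)
  constructor
  · rw [hspar_xts]; exact hsp
  · intro xt hxt hxtspar
    have hmnn : (0 : ℝ) ≤ ∑ j, xt j ^ 2 := Finset.sum_nonneg fun j _ => sq_nonneg _
    have hm : 0 < l2norm xt := by
      unfold l2norm
      apply Real.sqrt_pos.mpr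
      obtain ⟨j, hj⟩ : ∃ j, xt j ≠ 0 := by
        by_contra h; push_neg at h; exact hxt (funext h)
      have h1 : 0 < xt j ^ 2 := by positivity
      exact lt_of_lt_of_le h1 (Finset.single_le_sum (f := fun i => xt i ^ 2)
        (fun i _ => sq_nonneg _) (Finset.mem_univ j))
    set m : ℝ := l2norm xt with hmdef
    have hm2 : ∑ j, xt j ^ 2 = m ^ 2 := (Real.sq_sqrt hmnn).symm
    set u : Fin n → ℝ := fun j => |xt j| / m with hudef
    have hunn : ∀ j, 0 ≤ u j := fun j => div_nonneg (abs_nonneg _) hm.le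
    have hul2 : l2norm u = 1 := by
      unfold l2norm
      have h1 : ∑ j, (|xt j| / m) ^ 2 = (∑ j, xt j ^ 2) / m ^ 2 := by
        rw [Finset.sum_div]
        exact Finset.sum_congr rfl fun j _ => by rw [div_pow, sq_abs]
      show Real.sqrt (∑ j, (|xt j| / m) ^ 2) = 1
      rw [h1, hm2, div_self (by positivity), Real.sqrt_one]
    have hul1 : l1norm u = l1norm xt / m := by
      unfold l1norm
      rw [Finset.sum_div]
      exact Finset.sum_congr rfl fun j _ => by
        show |(|xt j| / m)| = |xt j| / m
        rw [abs_div, abs_abs, abs_of_pos hm]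
    have huspar : s ≤ spar u := by
      have h1 : spar u = spar xt := by
        unfold spar
        congr 2
        rw [hul2, hul1, div_one, ← hmdef]
      rw [h1]; exact hxtspar
    have h1 := hopt u hunn hul2 huspar
    have hsum_u : ∑ j, u j * |x j| = (∑ j, |xt j| * |x j|) / m := by
      rw [Finset.sum_div]
      exact Finset.sum_congr rfl fun j _ => by
        show |xt j| / m * |x j| = |xt j| * |x j| / m
        ring
    have hRHS : ∑ j, xbs j * |x j| = V := by
      rw [hVdef]
      exact Finset.sum_congr rfl fun j _ => mul_comm _ _
    have hXV : ∑ j, |xt j| * |x j| ≤ V * m := by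
      rw [hsum_u, hRHS] at h1
      exact (div_le_iff₀ hm).mp h1
    have hxxt : ∑ j, x j * xt j ≤ V * m := by
      refine le_trans (Finset.sum_le_sum fun j _ => ?_) hXV
      calc x j * xt j ≤ |x j * xt j| := le_abs_self _
        _ = |xt j| * |x j| := by rw [abs_mul]; ring
    have hxxts : ∑ j, x j * xts j = V * V := by
      have h2 : ∀ j, x j * xts j = V * (|x j| * xbs j) := by
        intro j
        rw [hxts_def j, ← hsgn j]; ring
      rw [Finset.sum_congr rfl fun j _ => h2 j, ← Finset.mul_sum, ← hVdef]
    unfold l2norm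
    apply Real.sqrt_le_sqrt
    have e1 : ∑ j, (x j - xts j) ^ 2
        = ∑ j, x j ^ 2 - 2 * ∑ j, (x j * xts j) + ∑ j, xts j ^ 2 := by
      rw [Finset.sum_congr rfl fun j (_ : j ∈ Finset.univ) =>
        show (x j - xts j) ^ 2 = x j ^ 2 - 2 * (x j * xts j) + xts j ^ 2 by ring]
      rw [Finset.sum_add_distrib, Finset.sum_sub_distrib, ← Finset.mul_sum]
    have e2 : ∑ j, (x j - xt j) ^ 2
        = ∑ j, x j ^ 2 - 2 * ∑ j, (x j * xt j) + ∑ j, xt j ^ 2 := by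
      rw [Finset.sum_congr rfl fun j (_ : j ∈ Finset.univ) =>
        show (x j - xt j) ^ 2 = x j ^ 2 - 2 * (x j * xt j) + xt j ^ 2 by ring]
      rw [Finset.sum_add_distrib, Finset.sum_sub_distrib, ← Finset.mul_sum]
    rw [e1, e2, hxxts, hsumxts2, hm2]
    have hVV : V * V = V ^ 2 := by ring
    have hexp : (m - V) ^ 2 = m ^ 2 - 2 * (V * m) + V ^ 2 := by ring
    linarith [sq_nonneg (m - V), hexp, hxxt, hVV]
end

section
/- Range of the weighted sparsity measure: let n ≥ 2, let w ∈ ℝⁿ be nonnegative and nonzero, and let x ∈ ℝⁿ be nonzero. Then minᵢ w(i) ≤ (wᵀ|x|)/‖x‖₂ ≤ ‖w‖₂, ‖w‖₂ > minᵢ w(i), and consequently the weighted sparsity spar_w(x) = (‖w‖₂ − (wᵀ|x|)/‖x‖₂)/(‖w‖₂ − minᵢ w(i)) lies in [0, 1]. -/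
lemma l2norm_pos {n : ℕ} {x : Fin n → ℝ} (hx : x ≠ 0) : 0 < l2norm x := by
  have : ∃ j, x j ≠ 0 := by
    by_contra h; push_neg at h; exact hx (funext h)
  obtain ⟨j, hj⟩ := this
  have hsum : 0 < ∑ j, (x j) ^ 2 :=
    Finset.sum_pos' (fun i _ => sq_nonneg _) ⟨j, Finset.mem_univ j, by positivity⟩
  exact Real.sqrt_pos.mpr hsum

lemma l2_le_l1 {n : ℕ} (x : Fin n → ℝ) : l2norm x ≤ ∑ j, |x j| := by
  have h1 : ∑ j, (x j) ^ 2 ≤ (∑ j, |x j|) ^ 2 := by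
    have := Finset.sum_sq_le_sq_sum_of_nonneg (s := Finset.univ)
      (f := fun j => |x j|) (fun i _ => abs_nonneg _)
    simpa [sq_abs] using this
  have := Real.sqrt_le_sqrt h1
  rwa [Real.sqrt_sq (by positivity)] at this

/-- Range of the weighted sparsity measure: for n ≥ 2, w ≥ 0 nonzero and x ≠ 0,
minᵢ w(i) ≤ wᵀ|x|/‖x‖₂ ≤ ‖w‖₂, ‖w‖₂ > minᵢ w(i), and
spar_w(x) = (‖w‖₂ − wᵀ|x|/‖x‖₂)/(‖w‖₂ − minᵢ w(i)) ∈ [0, 1]. -/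
theorem weighted_spar_range {n : ℕ} (hn : 2 ≤ n) (w : Fin n → ℝ)
    (hw : ∀ i, 0 ≤ w i) (hw0 : w ≠ 0) (x : Fin n → ℝ) (hx : x ≠ 0) :
    let wmin : ℝ := Finset.univ.inf' (Finset.univ_nonempty_iff.mpr ⟨⟨0, by omega⟩⟩) w
    wmin ≤ (∑ j, w j * |x j|) / l2norm x ∧
    (∑ j, w j * |x j|) / l2norm x ≤ l2norm w ∧
    wmin < l2norm w ∧
    (l2norm w - (∑ j, w j * |x j|) / l2norm x) / (l2norm w - wmin) ∈ Set.Icc (0 : ℝ) 1 := by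
  intro wmin
  have hL : 0 < l2norm x := l2norm_pos hx
  have hW : 0 < l2norm w := l2norm_pos hw0
  have hne : (Finset.univ : Finset (Fin n)).Nonempty :=
    Finset.univ_nonempty_iff.mpr ⟨⟨0, by omega⟩⟩
  have hwmin_le : ∀ i, wmin ≤ w i := fun i => Finset.inf'_le _ (Finset.mem_univ i)
  have hwmin0 : 0 ≤ wmin := Finset.le_inf' hne _ (fun i _ => hw i)
  -- lower bound
  have hlow : wmin ≤ (∑ j, w j * |x j|) / l2norm x := by
    rw [le_div_iff₀ hL]
    calc wmin * l2norm x ≤ wmin * ∑ j, |x j| := by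
          exact mul_le_mul_of_nonneg_left (l2_le_l1 x) hwmin0
      _ = ∑ j, wmin * |x j| := by rw [Finset.mul_sum]
      _ ≤ ∑ j, w j * |x j| :=
          Finset.sum_le_sum fun j _ => mul_le_mul_of_nonneg_right (hwmin_le j) (abs_nonneg _)
  -- upper bound (Cauchy-Schwarz)
  have hup : (∑ j, w j * |x j|) / l2norm x ≤ l2norm w := by
    rw [div_le_iff₀ hL]
    have := Real.sum_mul_le_sqrt_mul_sqrt Finset.univ w (fun j => |x j|)
    simpa [l2norm, sq_abs] using this
  -- wmin < l2norm w
  have hlt : wmin < l2norm w := by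
    rcases eq_or_lt_of_le hwmin0 with h0 | h0
    · rw [← h0]; exact hW
    · have hsq : wmin ^ 2 < ∑ j, (w j) ^ 2 := by
        have h1 : (n : ℝ) * wmin ^ 2 ≤ ∑ j, (w j) ^ 2 := by
          calc (n : ℝ) * wmin ^ 2 = ∑ _j : Fin n, wmin ^ 2 := by
                simp [Finset.sum_const, mul_comm]
            _ ≤ ∑ j, (w j) ^ 2 :=
                Finset.sum_le_sum fun j _ => pow_le_pow_left₀ hwmin0 (hwmin_le j) 2
        have h2 : wmin ^ 2 < (n : ℝ) * wmin ^ 2 := by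
          have : (1 : ℝ) < (n : ℝ) := by exact_mod_cast by omega
          nlinarith [sq_nonneg wmin, pow_pos h0 2]
        linarith
      have := Real.lt_sqrt hwmin0 (y := ∑ j, (w j) ^ 2)
      exact (Real.lt_sqrt hwmin0).mpr hsq
  refine ⟨hlow, hup, hlt, ?_, ?_⟩
  · apply div_nonneg (by linarith) (by linarith)
  · rw [div_le_one (by linarith)]
    linarith
end
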